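/- Let 0 < ν ≤ τ ≤ 1/2 and let G be an n-vertex simple graph that is a robust (ν, τ)-expander. Let G' be obtained from G by deleting at most ε·n edges at each vertex and at most ε·n vertices, where 2ε < ν. Then G' is a robust (ν − 2ε, 2τ)-expander, for every n. -/
import Mathlib


open Finset

/-- The `ν`-robust neighbourhood of `S` in a simple graph `G`, computed with respect
to the parameter `n`. -/
noncomputable def robNbhd {V : Type*} [Fintype V] [DecidableEq V] (G : SimpleGraph V)
    [DecidableRel G.Adj] (ν : ℝ) (n : ℕ) (S : Finset V) : Finset V :=
  univ.filter (fun v => ν * n ≤ ((S.filter (fun u => G.Adj v u)).card : ℝ))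

/-- Deleting at most `εn` edges at each vertex and at most `εn`
vertices from a robust `(ν, τ)`-expander yields a robust `(ν − 2ε, 2τ)`-expander
(robust neighbourhoods computed with respect to the original `n`). -/
theorem robust_expander_deletion
    {V : Type*} [Fintype V] [DecidableEq V]
    (G G' : SimpleGraph V) [DecidableRel G.Adj] [DecidableRel G'.Adj]
    (ν τ ε : ℝ) (W : Finset V)
    (hν : 0 < ν) (hντ : ν ≤ τ) (hτ : τ ≤ 1/2) (hε : 0 < ε) (hεν : 2*ε < ν)
    -- G is a robust (ν, τ)-expander on n = |V| vertices:
    (hexp : ∀ S : Finset V, τ * (Fintype.card V) ≤ S.card →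
      (S.card : ℝ) ≤ (1 - τ) * (Fintype.card V) →
      (S.card : ℝ) + ν * (Fintype.card V) ≤ ((robNbhd G ν (Fintype.card V) S).card : ℝ))
    -- G' is obtained from G by deleting the vertices of W and at most εn further
    -- edges at each vertex:
    (hsub : G' ≤ G)
    (hW : (W.card : ℝ) ≤ ε * (Fintype.card V))
    (hWdel : ∀ v ∈ W, ∀ u : V, ¬ G'.Adj v u)
    (hedel : ∀ v : V, v ∉ W →
      (((G.neighborFinset v) \ (G'.neighborFinset v ∪ W)).card : ℝ) ≤ ε * (Fintype.card V)) :
    -- conclusion: G' is a robust (ν − 2ε, 2τ)-expander on the surviving vertices,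
    -- with respect to the original n:
    ∀ S : Finset V, S ⊆ univ \ W →
      2 * τ * (Fintype.card V) ≤ S.card →
      (S.card : ℝ) ≤ (1 - 2 * τ) * (Fintype.card V) →
      (S.card : ℝ) + (ν - 2*ε) * (Fintype.card V) ≤
        ((robNbhd G' (ν - 2*ε) (Fintype.card V) S).card : ℝ) := by
  intro S hS h1 h2
  set n := Fintype.card V with hn
  have hn0 : (0:ℝ) ≤ n := Nat.cast_nonneg _
  have hτ0 : 0 < τ := lt_of_lt_of_le hν hντ
  have hτn : τ * n ≤ (S.card : ℝ) := by nlinarith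
  have h2' : (S.card : ℝ) ≤ (1 - τ) * n := by nlinarith
  have key := hexp S hτn h2'
  -- robNbhd G ν n S minus W is contained in robNbhd G' (ν-2ε) n S
  have hsubset : (robNbhd G ν n S) \ W ⊆ robNbhd G' (ν - 2*ε) n S := by
    intro v hv
    rw [mem_sdiff] at hv
    obtain ⟨hvA, hvW⟩ := hv
    rw [robNbhd, mem_filter] at hvA ⊢
    refine ⟨mem_univ _, ?_⟩
    have hD := hedel v hvW
    have hsub2 : S.filter (fun u => G.Adj v u) ⊆
        S.filter (fun u => G'.Adj v u) ∪ ((G.neighborFinset v) \ (G'.neighborFinset v ∪ W)) := by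
      intro u hu
      rw [mem_filter] at hu
      obtain ⟨huS, huAdj⟩ := hu
      by_cases hc : u ∈ (G.neighborFinset v) \ (G'.neighborFinset v ∪ W)
      · exact mem_union_right _ hc
      · refine mem_union_left _ (mem_filter.2 ⟨huS, ?_⟩)
        rw [mem_sdiff] at hc
        push_neg at hc
        have := hc ((SimpleGraph.mem_neighborFinset _ _ _).2 huAdj)
        rw [mem_union] at this
        rcases this with h | h
        · exact (SimpleGraph.mem_neighborFinset _ _ _).1 h
        · exact absurd h (by have := hS huS; rw [mem_sdiff] at this; exact this.2)
    have hcard := card_le_card hsub2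
    have hcard2 := card_union_le (S.filter (fun u => G'.Adj v u))
      ((G.neighborFinset v) \ (G'.neighborFinset v ∪ W))
    have : ((S.filter (fun u => G.Adj v u)).card : ℝ) ≤
        ((S.filter (fun u => G'.Adj v u)).card : ℝ) +
        (((G.neighborFinset v) \ (G'.neighborFinset v ∪ W)).card : ℝ) := by
      exact_mod_cast le_trans hcard hcard2
    nlinarith [hvA.2]
  have hle : ((robNbhd G ν n S).card : ℝ) - (W.card : ℝ)
      ≤ ((robNbhd G' (ν - 2*ε) n S).card : ℝ) := by
    have h3 : (robNbhd G ν n S).card ≤ ((robNbhd G ν n S) \ W).card + W.card := by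
      calc (robNbhd G ν n S).card ≤ ((robNbhd G ν n S) \ W ∪ W).card := by
            apply card_le_card; intro x hx
            rw [mem_union, mem_sdiff]; by_cases h : x ∈ W
            · exact Or.inr h
            · exact Or.inl ⟨hx, h⟩
        _ ≤ ((robNbhd G ν n S) \ W).card + W.card := card_union_le _ _
    have h4 : (((robNbhd G ν n S) \ W).card : ℝ) ≤ ((robNbhd G' (ν - 2*ε) n S).card : ℝ) :=
      by exact_mod_cast card_le_card hsubset
    have h3' : ((robNbhd G ν n S).card : ℝ) ≤ (((robNbhd G ν n S) \ W).card : ℝ) + W.card :=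
      by exact_mod_cast h3
    linarith
  nlinarith
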